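/- Let η(t) : Γ₁ → ℝ³ be a smooth family of immersions of a 2-dimensional domain with induced metric g_{ij} = ∂_i η^μ ∂_j η_μ. Then for any derivative D (in time or tangential direction), D(√g Δ_g η^α) = ∂_i ( √g g^{ij} (δ^α_λ − g^{kl} ∂_k η^α ∂_l η_λ) D∂_j η^λ + √g (g^{ij} g^{kl} − g^{lj} g^{ik}) ∂_j η^α ∂_k η_λ D∂_l η^λ ). -/

import Mathlib

/-- Tangential partial derivative (in the `i`-th surface direction) of a scalar
function on `ℝ × ℝ²` (time × surface coordinates). -/
noncomputable def pdS (f : ℝ × (Fin 2 → ℝ) → ℝ) (i : Fin 2) (p : ℝ × (Fin 2 → ℝ)) : ℝ :=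
  fderiv ℝ f p ((0 : ℝ), Pi.single i 1)

/-- Induced metric `g_{ij} = ∂_i η^μ ∂_j η_μ` of the family of immersions
`η(t) : Γ₁ → ℝ³`. -/
noncomputable def met (η : ℝ × (Fin 2 → ℝ) → Fin 3 → ℝ) (p : ℝ × (Fin 2 → ℝ)) :
    Matrix (Fin 2) (Fin 2) ℝ :=
  Matrix.of fun i j => ∑ μ : Fin 3,
    pdS (fun q => η q μ) i p * pdS (fun q => η q μ) j p

/-!  Auxiliary development -/
abbrev Pt := ℝ × (Fin 2 → ℝ)

section rules
variable {f g : Pt → ℝ} {q w : Pt}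

lemma D_mul (hf : DifferentiableAt ℝ f q) (hg : DifferentiableAt ℝ g q) :
    fderiv ℝ (fun x => f x * g x) q w = fderiv ℝ f q w * g q + f q * fderiv ℝ g q w := by
  rw [fderiv_fun_mul hf hg]
  simp only [ContinuousLinearMap.add_apply, ContinuousLinearMap.smul_apply, smul_eq_mul]
  ring

lemma D_add (hf : DifferentiableAt ℝ f q) (hg : DifferentiableAt ℝ g q) :
    fderiv ℝ (fun x => f x + g x) q w = fderiv ℝ f q w + fderiv ℝ g q w := by
  rw [fderiv_fun_add hf hg]; simp

lemma D_sub (hf : DifferentiableAt ℝ f q) (hg : DifferentiableAt ℝ g q) :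
    fderiv ℝ (fun x => f x - g x) q w = fderiv ℝ f q w - fderiv ℝ g q w := by
  rw [fderiv_fun_sub hf hg]; simp

lemma D_inv_sqrt (hf : DifferentiableAt ℝ f q) (h : 0 < f q) :
    fderiv ℝ (fun x => (Real.sqrt (f x))⁻¹) q w
      = -fderiv ℝ f q w / (2 * Real.sqrt (f q) * f q) := by
  have hs : HasFDerivAt (fun x => Real.sqrt (f x))
      ((1 / (2 * Real.sqrt (f q))) • fderiv ℝ f q) q :=
    (Real.hasDerivAt_sqrt h.ne').comp_hasFDerivAt q hf.hasFDerivAt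
  have hi : HasFDerivAt (fun x => (Real.sqrt (f x))⁻¹)
      ((-((Real.sqrt (f q)) ^ 2)⁻¹) • ((1 / (2 * Real.sqrt (f q))) • fderiv ℝ f q)) q :=
    (hasDerivAt_inv (Real.sqrt_ne_zero'.2 h)).comp_hasFDerivAt q hs
  rw [hi.fderiv]
  have h2 : Real.sqrt (f q) ^ 2 = f q := Real.sq_sqrt h.le
  have hs0 : Real.sqrt (f q) ≠ 0 := (Real.sqrt_ne_zero'.2 h)
  simp only [ContinuousLinearMap.smul_apply, smul_eq_mul, h2]
  field_simp

end rules

section geom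
variable (η : Pt → Fin 3 → ℝ)

noncomputable def EE (μ : Fin 3) (j : Fin 2) : Pt → ℝ := fun q => pdS (fun q' => η q' μ) j q

noncomputable def GG (i j : Fin 2) : Pt → ℝ := fun q =>
  EE η 0 i q * EE η 0 j q + EE η 1 i q * EE η 1 j q + EE η 2 i q * EE η 2 j q

noncomputable def dd : Pt → ℝ := fun q =>
  GG η 0 0 q * GG η 1 1 q - GG η 0 1 q * GG η 1 0 q

lemma met_apply (q : Pt) (i j : Fin 2) : met η q i j = GG η i j q := by
  simp [met, GG, EE, Fin.sum_univ_three]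

lemma det_eq (q : Pt) : (met η q).det = dd η q := by
  rw [Matrix.det_fin_two, dd, met_apply, met_apply, met_apply, met_apply]

lemma inv_eq (q : Pt) : (met η q)⁻¹ =
    (dd η q)⁻¹ • !![GG η 1 1 q, -GG η 0 1 q; -GG η 1 0 q, GG η 0 0 q] := by
  rw [Matrix.inv_def, Matrix.adjugate_fin_two, Ring.inverse_eq_inv', det_eq]
  congr 1
  rw [met_apply, met_apply, met_apply, met_apply]

variable {η} (hη : ContDiff ℝ (⊤ : ℕ∞) η)
include hη

omit hη in
lemma contDiff_pdS (f : Pt → ℝ) (hf : ContDiff ℝ (⊤ : ℕ∞) f) (i : Fin 2) :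
    ContDiff ℝ (⊤ : ℕ∞) (fun q => pdS f i q) := by
  unfold pdS
  exact (hf.fderiv_right (by simp)).clm_apply contDiff_const

lemma contDiff_EE (μ : Fin 3) (j : Fin 2) : ContDiff ℝ (⊤ : ℕ∞) (EE η μ j) := by
  unfold EE pdS
  exact (((contDiff_pi.1 hη μ)).fderiv_right (by simp)).clm_apply contDiff_const

lemma contDiff_GG (i j : Fin 2) : ContDiff ℝ (⊤ : ℕ∞) (GG η i j) := by
  unfold GG
  exact (((contDiff_EE hη 0 i).mul (contDiff_EE hη 0 j)).add
    ((contDiff_EE hη 1 i).mul (contDiff_EE hη 1 j))).add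
    ((contDiff_EE hη 2 i).mul (contDiff_EE hη 2 j))

lemma contDiff_dd : ContDiff ℝ (⊤ : ℕ∞) (dd η) := by
  unfold dd
  exact ((contDiff_GG hη 0 0).mul (contDiff_GG hη 1 1)).sub
    ((contDiff_GG hη 0 1).mul (contDiff_GG hη 1 0))

end geom

lemma fderiv_pdS_comm (f : Pt → ℝ) (hf : ContDiff ℝ (⊤ : ℕ∞) f) (i : Fin 2) (w p₀ : Pt) :
    fderiv ℝ (fun p => pdS f i p) p₀ w = pdS (fun q => fderiv ℝ f q w) i p₀ := by
  have hsym : IsSymmSndFDerivAt ℝ f p₀ := hf.contDiffAt.isSymmSndFDerivAt (by rw [minSmoothness_of_isRCLikeNormedField]; exact WithTop.coe_le_coe.2 le_top)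
  have hdf : DifferentiableAt ℝ (fderiv ℝ f) p₀ :=
    ((hf.fderiv_right (m := 1) (WithTop.coe_le_coe.2 le_top)).differentiable one_ne_zero).differentiableAt
  unfold pdS
  rw [fderiv_clm_apply hdf (differentiableAt_const _),
    fderiv_clm_apply hdf (differentiableAt_const _)]
  simp only [fderiv_const, fderiv_const_apply, Pi.zero_apply, ContinuousLinearMap.add_apply,
    ContinuousLinearMap.comp_apply, ContinuousLinearMap.zero_apply, map_zero,
    ContinuousLinearMap.flip_apply, zero_add]
  exact hsym w _

section rules2
variable {f : Pt → ℝ} {q w : Pt}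

lemma D_neg (f : Pt → ℝ) (q w : Pt) :
    fderiv ℝ (fun x => -f x) q w = -fderiv ℝ f q w := by
  rw [fderiv_fun_neg]; simp

lemma D_shape (c0 c1 x0 x1 d : Pt → ℝ) (q w : Pt)
    (hc0 : DifferentiableAt ℝ c0 q) (hc1 : DifferentiableAt ℝ c1 q)
    (hx0 : DifferentiableAt ℝ x0 q) (hx1 : DifferentiableAt ℝ x1 q)
    (hd : DifferentiableAt ℝ d q) (hpos : 0 < d q) :
    fderiv ℝ (fun p => (c0 p * x0 p + c1 p * x1 p) * (Real.sqrt (d p))⁻¹) q w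
      = (fderiv ℝ c0 q w * x0 q + c0 q * fderiv ℝ x0 q w
          + fderiv ℝ c1 q w * x1 q + c1 q * fderiv ℝ x1 q w) * (Real.sqrt (d q))⁻¹
        + (c0 q * x0 q + c1 q * x1 q) *
            (-fderiv ℝ d q w / (2 * Real.sqrt (d q) * d q)) := by
  rw [D_mul (((hc0.fun_mul hx0).fun_add (hc1.fun_mul hx1)))
      (((hd.sqrt hpos.ne').fun_inv (Real.sqrt_ne_zero'.2 hpos)))]
  rw [D_add (hc0.fun_mul hx0) (hc1.fun_mul hx1), D_mul hc0 hx0, D_mul hc1 hx1,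
    D_inv_sqrt hd hpos]
  ring

end rules2

section geom2
variable {η : Pt → Fin 3 → ℝ} (hη : ContDiff ℝ (⊤ : ℕ∞) η)
include hη

lemma diff_EE (μ : Fin 3) (j : Fin 2) (q : Pt) : DifferentiableAt ℝ (EE η μ j) q :=
  ((contDiff_EE hη μ j).differentiable (by simp)).differentiableAt

lemma diff_GG (i j : Fin 2) (q : Pt) : DifferentiableAt ℝ (GG η i j) q :=
  ((contDiff_GG hη i j).differentiable (by simp)).differentiableAt

lemma diff_dd (q : Pt) : DifferentiableAt ℝ (dd η) q :=
  ((contDiff_dd hη).differentiable (by simp)).differentiableAt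

lemma D_GG (i j : Fin 2) (q w : Pt) :
    fderiv ℝ (GG η i j) q w
      = fderiv ℝ (EE η 0 i) q w * EE η 0 j q + EE η 0 i q * fderiv ℝ (EE η 0 j) q w
        + (fderiv ℝ (EE η 1 i) q w * EE η 1 j q + EE η 1 i q * fderiv ℝ (EE η 1 j) q w)
        + (fderiv ℝ (EE η 2 i) q w * EE η 2 j q + EE η 2 i q * fderiv ℝ (EE η 2 j) q w) := by
  unfold GG
  rw [D_add ((diff_EE hη 0 i q).fun_mul (diff_EE hη 0 j q) |>.fun_add
      ((diff_EE hη 1 i q).fun_mul (diff_EE hη 1 j q))) ((diff_EE hη 2 i q).fun_mul (diff_EE hη 2 j q)),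
    D_add ((diff_EE hη 0 i q).fun_mul (diff_EE hη 0 j q)) ((diff_EE hη 1 i q).fun_mul (diff_EE hη 1 j q)),
    D_mul (diff_EE hη 0 i q) (diff_EE hη 0 j q),
    D_mul (diff_EE hη 1 i q) (diff_EE hη 1 j q),
    D_mul (diff_EE hη 2 i q) (diff_EE hη 2 j q)]

lemma D_dd (q w : Pt) :
    fderiv ℝ (dd η) q w
      = fderiv ℝ (GG η 0 0) q w * GG η 1 1 q + GG η 0 0 q * fderiv ℝ (GG η 1 1) q w
        - (fderiv ℝ (GG η 0 1) q w * GG η 1 0 q + GG η 0 1 q * fderiv ℝ (GG η 1 0) q w) := by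
  unfold dd
  rw [D_sub ((diff_GG hη 0 0 q).fun_mul (diff_GG hη 1 1 q)) ((diff_GG hη 0 1 q).fun_mul (diff_GG hη 1 0 q)),
    D_mul (diff_GG hη 0 0 q) (diff_GG hη 1 1 q),
    D_mul (diff_GG hη 0 1 q) (diff_GG hη 1 0 q)]

end geom2

lemma delta_sum (α : Fin 3) (c : ℝ) (S B : Fin 3 → ℝ) :
    (∑ lam : Fin 3, c * ((if α = lam then (1:ℝ) else 0) - S lam) * B lam)
      = c * B α - ∑ lam : Fin 3, c * S lam * B lam := by
  rw [Fin.sum_univ_three, Fin.sum_univ_three]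
  fin_cases α <;> simp <;> ring

lemma EE_ap (η : Pt → Fin 3 → ℝ) (μ : Fin 3) (j : Fin 2) (q : Pt) :
    pdS (fun q' => η q' μ) j q = EE η μ j q := rfl

set_option maxHeartbeats 1000000 in
lemma key (η : Pt → Fin 3 → ℝ) (hη : ContDiff ℝ (⊤ : ℕ∞) η)
    (hg : ∀ p, 0 < (met η p).det) (w : Pt) (α : Fin 3) (i : Fin 2) (q : Pt) :
    fderiv ℝ (fun q => Real.sqrt ((met η q).det) *
          ∑ j : Fin 2, (met η q)⁻¹ i j * pdS (fun q' => η q' α) j q) q w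
      = Real.sqrt ((met η q).det) * (∑ j : Fin 2, ∑ lam : Fin 3,
            (met η q)⁻¹ i j *
              ((if α = lam then (1 : ℝ) else 0)
                - ∑ k : Fin 2, ∑ l : Fin 2,
                    (met η q)⁻¹ k l * pdS (fun q' => η q' α) k q *
                      pdS (fun q' => η q' lam) l q) *
              fderiv ℝ (fun q' => pdS (fun q'' => η q'' lam) j q') q w)
          + Real.sqrt ((met η q).det) *
              ∑ j : Fin 2, ∑ k : Fin 2, ∑ l : Fin 2, ∑ lam : Fin 3,
                ((met η q)⁻¹ i j * (met η q)⁻¹ k l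
                    - (met η q)⁻¹ l j * (met η q)⁻¹ i k) *
                  pdS (fun q' => η q' α) j q * pdS (fun q' => η q' lam) k q *
                  fderiv ℝ (fun q' => pdS (fun q'' => η q'' lam) l q') q w := by
  have hd : 0 < dd η q := by rw [← det_eq]; exact hg q
  have hd0 : dd η q ≠ 0 := hd.ne'
  have hs0 : Real.sqrt (dd η q) ≠ 0 := Real.sqrt_ne_zero'.2 hd
  have hs2 : Real.sqrt (dd η q) * Real.sqrt (dd η q) = dd η q := Real.mul_self_sqrt hd.le
  have r1 : (Real.sqrt (dd η q))⁻¹ = Real.sqrt (dd η q) / dd η q := by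
    rw [eq_div_iff hd0]; nth_rewrite 2 [← hs2]; rw [← mul_assoc, inv_mul_cancel₀ hs0, one_mul]
  have r2 : ∀ x : ℝ, x / (2 * Real.sqrt (dd η q) * dd η q)
      = x * Real.sqrt (dd η q) / (2 * (dd η q * dd η q)) := by
    intro x
    rw [div_eq_div_iff (by positivity) (by positivity)]
    linear_combination (-(2 * x * dd η q)) * hs2
  obtain hi | hi : i = 0 ∨ i = 1 := by omega
  all_goals subst hi
  · -- i = 0
    have hfun : (fun q => Real.sqrt ((met η q).det) *
          ∑ j : Fin 2, (met η q)⁻¹ 0 j * pdS (fun q' => η q' α) j q)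
        = fun p => (GG η 1 1 p * EE η α 0 p + (-(GG η 0 1 p)) * EE η α 1 p) *
            (Real.sqrt (dd η p))⁻¹ := by
      funext p
      have hdp : 0 < dd η p := by rw [← det_eq]; exact hg p
      have hsp : Real.sqrt (dd η p) * Real.sqrt (dd η p) = dd η p := Real.mul_self_sqrt hdp.le
      have hsp0 : Real.sqrt (dd η p) ≠ 0 := Real.sqrt_ne_zero'.2 hdp
      rw [det_eq, inv_eq, Fin.sum_univ_two]
      simp only [Matrix.smul_apply, Matrix.of_apply, Matrix.cons_val', Matrix.cons_val_zero, Matrix.cons_val_one,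
        Matrix.head_cons, Matrix.head_fin_const, Matrix.empty_val', Matrix.cons_val_fin_one,
        smul_eq_mul, EE_ap]
      field_simp
      linear_combination (GG η 1 1 p * EE η α 0 p - GG η 0 1 p * EE η α 1 p) * hsp
    rw [hfun]
    have step := D_shape (GG η 1 1) (fun p => -(GG η 0 1 p)) (EE η α 0) (EE η α 1) (dd η) q w
      (diff_GG hη 1 1 q) ((diff_GG hη 0 1 q).neg) (diff_EE hη α 0 q) (diff_EE hη α 1 q)
      (diff_dd hη q) hd
    refine step.trans ?_
    rw [D_neg (GG η 0 1) q w, D_dd hη q w, D_GG hη 0 0 q w, D_GG hη 1 1 q w,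
      D_GG hη 0 1 q w, D_GG hη 1 0 q w]
    -- RHS simplification
    rw [det_eq]
    simp only [Fin.sum_univ_two]
    rw [delta_sum, delta_sum]
    simp only [Fin.sum_univ_three]
    rw [inv_eq]
    simp only [Matrix.smul_apply, Matrix.of_apply, Matrix.cons_val', Matrix.cons_val_zero, Matrix.cons_val_one,
      Matrix.head_cons, Matrix.head_fin_const, Matrix.empty_val', Matrix.cons_val_fin_one,
      smul_eq_mul, EE_ap]
    rw [r1]
    simp only [neg_div, r2]
    have hGq : GG η 0 1 q = GG η 1 0 q := by simp only [GG]; ring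
    have hdet : dd η q = GG η 0 0 q * GG η 1 1 q - GG η 1 0 q * GG η 1 0 q := by
      simp only [dd, hGq]
    generalize Real.sqrt (dd η q) = s
    rw [hGq, hdet]
    have hD0 : GG η 0 0 q * GG η 1 1 q - GG η 1 0 q * GG η 1 0 q ≠ 0 := hdet ▸ hd0
    field_simp
    ring
  · -- i = 1
    have hfun : (fun q => Real.sqrt ((met η q).det) *
          ∑ j : Fin 2, (met η q)⁻¹ 1 j * pdS (fun q' => η q' α) j q)
        = fun p => ((-(GG η 1 0 p)) * EE η α 0 p + GG η 0 0 p * EE η α 1 p) *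
            (Real.sqrt (dd η p))⁻¹ := by
      funext p
      have hdp : 0 < dd η p := by rw [← det_eq]; exact hg p
      have hsp : Real.sqrt (dd η p) * Real.sqrt (dd η p) = dd η p := Real.mul_self_sqrt hdp.le
      have hsp0 : Real.sqrt (dd η p) ≠ 0 := Real.sqrt_ne_zero'.2 hdp
      rw [det_eq, inv_eq, Fin.sum_univ_two]
      simp only [Matrix.smul_apply, Matrix.of_apply, Matrix.cons_val', Matrix.cons_val_zero, Matrix.cons_val_one,
        Matrix.head_cons, Matrix.head_fin_const, Matrix.empty_val', Matrix.cons_val_fin_one,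
        smul_eq_mul, EE_ap]
      field_simp
      linear_combination (-(GG η 1 0 p) * EE η α 0 p + GG η 0 0 p * EE η α 1 p) * hsp
    rw [hfun]
    have step := D_shape (fun p => -(GG η 1 0 p)) (GG η 0 0) (EE η α 0) (EE η α 1) (dd η) q w
      ((diff_GG hη 1 0 q).neg) (diff_GG hη 0 0 q) (diff_EE hη α 0 q) (diff_EE hη α 1 q)
      (diff_dd hη q) hd
    refine step.trans ?_
    rw [D_neg (GG η 1 0) q w, D_dd hη q w, D_GG hη 0 0 q w, D_GG hη 1 1 q w,
      D_GG hη 0 1 q w, D_GG hη 1 0 q w]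
    rw [det_eq]
    simp only [Fin.sum_univ_two]
    rw [delta_sum, delta_sum]
    simp only [Fin.sum_univ_three]
    rw [inv_eq]
    simp only [Matrix.smul_apply, Matrix.of_apply, Matrix.cons_val', Matrix.cons_val_zero, Matrix.cons_val_one,
      Matrix.head_cons, Matrix.head_fin_const, Matrix.empty_val', Matrix.cons_val_fin_one,
      smul_eq_mul, EE_ap]
    rw [r1]
    simp only [neg_div, r2]
    have hGq : GG η 0 1 q = GG η 1 0 q := by simp only [GG]; ring
    have hdet : dd η q = GG η 0 0 q * GG η 1 1 q - GG η 1 0 q * GG η 1 0 q := by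
      simp only [dd, hGq]
    generalize Real.sqrt (dd η q) = s
    rw [hGq, hdet]
    have hD0 : GG η 0 0 q * GG η 1 1 q - GG η 1 0 q * GG η 1 0 q ≠ 0 := hdet ▸ hd0
    field_simp
    ring

/-- For a smooth family of immersions `η(t)` and any derivative `D` (in time or a
tangential direction, encoded by the direction `w ∈ ℝ × ℝ²`),
`D(√g Δ_g η^α) = ∂_i( √g g^{ij} (δ^α_λ − g^{kl} ∂_k η^α ∂_l η_λ) D∂_j η^λ
  + √g (g^{ij} g^{kl} − g^{lj} g^{ik}) ∂_j η^α ∂_k η_λ D∂_l η^λ )`,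
where `√g Δ_g η^α = ∂_i(√g g^{ij} ∂_j η^α)`. -/
theorem derivative_of_mean_curvature_term
    (η : ℝ × (Fin 2 → ℝ) → Fin 3 → ℝ) (hη : ContDiff ℝ (⊤ : ℕ∞) η)
    (hg : ∀ p, 0 < (met η p).det)
    (w : ℝ × (Fin 2 → ℝ)) (α : Fin 3) (p₀ : ℝ × (Fin 2 → ℝ)) :
    fderiv ℝ (fun p => ∑ i : Fin 2,
        pdS (fun q => Real.sqrt ((met η q).det) *
          ∑ j : Fin 2, (met η q)⁻¹ i j * pdS (fun q' => η q' α) j q) i p) p₀ w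
      = ∑ i : Fin 2, pdS (fun q =>
          Real.sqrt ((met η q).det) * (∑ j : Fin 2, ∑ lam : Fin 3,
            (met η q)⁻¹ i j *
              ((if α = lam then (1 : ℝ) else 0)
                - ∑ k : Fin 2, ∑ l : Fin 2,
                    (met η q)⁻¹ k l * pdS (fun q' => η q' α) k q *
                      pdS (fun q' => η q' lam) l q) *
              fderiv ℝ (fun q' => pdS (fun q'' => η q'' lam) j q') q w)
          + Real.sqrt ((met η q).det) *
              ∑ j : Fin 2, ∑ k : Fin 2, ∑ l : Fin 2, ∑ lam : Fin 3,
                ((met η q)⁻¹ i j * (met η q)⁻¹ k l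
                    - (met η q)⁻¹ l j * (met η q)⁻¹ i k) *
                  pdS (fun q' => η q' α) j q * pdS (fun q' => η q' lam) k q *
                  fderiv ℝ (fun q' => pdS (fun q'' => η q'' lam) l q') q w) i p₀ := by
  -- smoothness of the inner functions
  have hF : ∀ i : Fin 2, ContDiff ℝ (⊤ : ℕ∞) (fun q => Real.sqrt ((met η q).det) *
      ∑ j : Fin 2, (met η q)⁻¹ i j * pdS (fun q' => η q' α) j q) := by
    intro i
    rw [contDiff_iff_contDiffAt]
    intro q
    have hdq : 0 < dd η q := by rw [← det_eq]; exact hg q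
    have h1 : ContDiffAt ℝ (⊤ : ℕ∞) (fun p => Real.sqrt ((met η p).det)) q := by
      have : ContDiffAt ℝ (⊤ : ℕ∞) (fun p => (met η p).det) q := by
        have := contDiff_dd hη
        simp only [det_eq]
        exact this.contDiffAt
      exact this.sqrt (by rw [det_eq]; exact hdq.ne')
    have h2 : ContDiffAt ℝ (⊤ : ℕ∞) (fun p => ∑ j : Fin 2, (met η p)⁻¹ i j *
        pdS (fun q' => η q' α) j p) q := by
      apply ContDiffAt.sum
      intro j _
      apply ContDiffAt.mul
      · -- inverse entry
        have : (fun p => (met η p)⁻¹ i j)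
            = fun p => (dd η p)⁻¹ * (!![GG η 1 1 p, -GG η 0 1 p; -GG η 1 0 p, GG η 0 0 p] i j) := by
          funext p
          rw [inv_eq]
          simp [Matrix.smul_apply]
        rw [this]
        apply ContDiffAt.mul
        · exact ((contDiff_dd hη).contDiffAt).inv (by
            have : 0 < dd η q := hdq
            exact this.ne')
        · fin_cases i <;> fin_cases j <;>
            simp only [Matrix.cons_val', Matrix.cons_val_zero, Matrix.cons_val_one,
              Matrix.head_cons, Matrix.head_fin_const, Matrix.empty_val',
              Matrix.cons_val_fin_one] <;>
            exact ContDiff.contDiffAt (by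
              first
                | exact contDiff_GG hη _ _
                | exact (contDiff_GG hη _ _).neg)
      · exact (contDiff_EE hη α j).contDiffAt
    exact h1.mul h2
  have hdiff : ∀ i : Fin 2, DifferentiableAt ℝ (fun p => pdS (fun q =>
      Real.sqrt ((met η q).det) * ∑ j : Fin 2, (met η q)⁻¹ i j *
        pdS (fun q' => η q' α) j q) i p) p₀ :=
    fun i => ((contDiff_pdS _ (hF i) i).differentiable (by simp)).differentiableAt
  rw [Fin.sum_univ_two]
  rw [show (fun p => ∑ i : Fin 2, pdS (fun q => Real.sqrt ((met η q).det) *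
        ∑ j : Fin 2, (met η q)⁻¹ i j * pdS (fun q' => η q' α) j q) i p)
      = fun p => (pdS (fun q => Real.sqrt ((met η q).det) *
          ∑ j : Fin 2, (met η q)⁻¹ 0 j * pdS (fun q' => η q' α) j q) 0 p)
        + (pdS (fun q => Real.sqrt ((met η q).det) *
          ∑ j : Fin 2, (met η q)⁻¹ 1 j * pdS (fun q' => η q' α) j q) 1 p) from by
    funext p; rw [Fin.sum_univ_two]]
  rw [D_add (hdiff 0) (hdiff 1)]
  rw [fderiv_pdS_comm _ (hF 0) 0 w p₀, fderiv_pdS_comm _ (hF 1) 1 w p₀]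
  congr 1
  · exact congrArg (fun f => pdS f 0 p₀) (funext fun q => key η hη hg w α 0 q)
  · exact congrArg (fun f => pdS f 1 p₀) (funext fun q => key η hη hg w α 1 q)
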